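/- arXiv:1106.5089 — 5 statements merged into one kernel-verified Lean document; each statement's English description precedes it below -/
import Mathlib

section
/- Let Y be a closed subspace of a Banach space X through an isometric embedding i : Y → X. If Y is locally λ-complemented in X, then every finite-rank bounded linear operator T : Y → F (F any Banach space, T of finite rank) extends to a bounded linear operator T̃ : X → F with T̃ ∘ i = T and ‖T̃‖ ≤ λ‖T‖. -/
open Filter Metric Topology

/-- Kalton's theorem, implication (1) ⇒ (3): if `Y` is locally `λ`-complemented in `X`
through the isometric embedding `i`, then every finite-rank bounded operator
`T : Y → F` extends to `X` with norm at most `λ‖T‖`. -/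
theorem finite_rank_extension_of_locally_complemented
    {Y X : Type*} [NormedAddCommGroup Y] [NormedSpace ℝ Y] [CompleteSpace Y]
    [NormedAddCommGroup X] [NormedSpace ℝ X] [CompleteSpace X]
    (i : Y →L[ℝ] X) (hi : ∀ y, ‖i y‖ = ‖y‖) (lam : ℝ)
    (hloc : ∀ G : Submodule ℝ X, FiniteDimensional ℝ G →
        ∃ r : G →L[ℝ] Y, ‖r‖ ≤ lam ∧ ∀ (y : Y) (h : i y ∈ G), r ⟨i y, h⟩ = y)
    {F : Type*} [NormedAddCommGroup F] [NormedSpace ℝ F] [CompleteSpace F]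
    (T : Y →L[ℝ] F) (hT : FiniteDimensional ℝ (LinearMap.range (T : Y →ₗ[ℝ] F))) :
    ∃ Te : X →L[ℝ] F, Te.comp i = T ∧ ‖Te‖ ≤ lam * ‖T‖ := by
  classical
  obtain ⟨r0, hr0, -⟩ := hloc ⊥ inferInstance
  have hlam : 0 ≤ lam := le_trans (norm_nonneg r0) hr0
  set C := lam * ‖T‖ with hCdef
  have hC0 : 0 ≤ C := mul_nonneg hlam (norm_nonneg T)
  -- the directed set of finite-dimensional subspaces
  let ι := {G : Submodule ℝ X // FiniteDimensional ℝ G}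
  haveI : IsDirected ι (· ≤ ·) := ⟨fun a b => by
    have hfd : FiniteDimensional ℝ (a.1 ⊔ b.1 : Submodule ℝ X) := by
      haveI := a.2; haveI := b.2; exact Submodule.finiteDimensional_sup a.1 b.1
    exact ⟨⟨a.1 ⊔ b.1, hfd⟩, show a.1 ≤ a.1 ⊔ b.1 from le_sup_left,
      show b.1 ≤ a.1 ⊔ b.1 from le_sup_right⟩⟩
  haveI : Nonempty ι := ⟨⟨⊥, inferInstance⟩⟩
  haveI : (atTop : Filter ι).NeBot := atTop_neBot
  let 𝒰 : Ultrafilter ι := Ultrafilter.of atTop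
  have h𝒰 : (𝒰 : Filter ι) ≤ atTop := Ultrafilter.of_le _
  have hmem : ∀ x : X, ∀ᶠ G : ι in (𝒰 : Filter ι), x ∈ G.1 := by
    intro x
    apply h𝒰
    refine eventually_atTop.2 ⟨⟨Submodule.span ℝ {x}, inferInstance⟩, fun G hG => ?_⟩
    exact Submodule.span_le.1 hG (Set.mem_singleton x)
  choose r hr hrY using fun G : ι => hloc G.1 G.2
  let s : ι → X → F := fun G x => if h : x ∈ G.1 then T (r G ⟨x, h⟩) else 0
  set R := LinearMap.range (T : Y →ₗ[ℝ] F) with hRdef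
  haveI : FiniteDimensional ℝ R := hT
  have hs_mem : ∀ (G : ι) (x : X), s G x ∈ R := by
    intro G x
    by_cases h : x ∈ G.1
    · simp only [s, dif_pos h]
      exact LinearMap.mem_range_self _ _
    · simp only [s, dif_neg h]
      exact zero_mem R
  have hs_norm : ∀ (G : ι) (x : X), ‖s G x‖ ≤ C * ‖x‖ := by
    intro G x
    by_cases h : x ∈ G.1
    · simp only [s, dif_pos h]
      calc ‖T (r G ⟨x, h⟩)‖ ≤ ‖T‖ * ‖r G ⟨x, h⟩‖ := T.le_opNorm _
        _ ≤ ‖T‖ * (‖r G‖ * ‖(⟨x, h⟩ : G.1)‖) :=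
          mul_le_mul_of_nonneg_left ((r G).le_opNorm _) (norm_nonneg T)
        _ = ‖T‖ * (‖r G‖ * ‖x‖) := rfl
        _ ≤ ‖T‖ * (lam * ‖x‖) := by
          apply mul_le_mul_of_nonneg_left _ (norm_nonneg T)
          exact mul_le_mul_of_nonneg_right (hr G) (norm_nonneg x)
        _ = C * ‖x‖ := by ring
    · simp only [s, dif_neg h, norm_zero]
      positivity
  -- existence of ultrafilter limits, using compactness in the range of T
  have hlim : ∀ x : X, ∃ c : F, Tendsto (fun G => s G x) (𝒰 : Filter ι) (𝓝 c) := by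
    intro x
    let s' : ι → R := fun G => ⟨s G x, hs_mem G x⟩
    have hb : ∀ G, s' G ∈ closedBall (0 : R) (C * ‖x‖) := by
      intro G
      rw [mem_closedBall, dist_zero_right]
      exact hs_norm G x
    obtain ⟨c, -, hc⟩ := (isCompact_closedBall (0 : R) (C * ‖x‖)).ultrafilter_le_nhds
      (𝒰.map s') (le_principal_iff.2 (Filter.mem_map.2 (by
        exact Filter.Eventually.of_forall hb)))
    refine ⟨(c : F), ?_⟩
    have : Tendsto s' (𝒰 : Filter ι) (𝓝 c) := hc
    exact (continuous_subtype_val.tendsto c).comp this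
  choose f hf using hlim
  have hadd : ∀ x z : X, f (x + z) = f x + f z := by
    intro x z
    refine tendsto_nhds_unique (hf (x + z)) (((hf x).add (hf z)).congr' ?_)
    filter_upwards [hmem x, hmem z] with G hx hz
    have hxz : x + z ∈ G.1 := add_mem hx hz
    simp only [s, dif_pos hx, dif_pos hz, dif_pos hxz]
    have : (⟨x + z, hxz⟩ : G.1) = ⟨x, hx⟩ + ⟨z, hz⟩ := rfl
    rw [this, map_add, map_add]
  have hsmul : ∀ (a : ℝ) (x : X), f (a • x) = a • f x := by
    intro a x
    refine tendsto_nhds_unique (hf (a • x)) (((hf x).const_smul a).congr' ?_)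
    filter_upwards [hmem x] with G hx
    have hax : a • x ∈ G.1 := Submodule.smul_mem G.1 a hx
    simp only [s, dif_pos hx, dif_pos hax]
    have : (⟨a • x, hax⟩ : G.1) = a • ⟨x, hx⟩ := rfl
    rw [this, map_smul, map_smul]
  have hnorm : ∀ x : X, ‖f x‖ ≤ C * ‖x‖ := fun x =>
    le_of_tendsto (hf x).norm (Filter.Eventually.of_forall fun G => hs_norm G x)
  let L : X →ₗ[ℝ] F :=
    { toFun := f, map_add' := hadd, map_smul' := hsmul }
  refine ⟨L.mkContinuous C hnorm, ?_, LinearMap.mkContinuous_norm_le L hC0 hnorm⟩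
  ext y
  show f (i y) = T y
  refine tendsto_nhds_unique (hf (i y)) (tendsto_const_nhds.congr' ?_)
  filter_upwards [hmem (i y)] with G hy
  simp only [s, dif_pos hy]
  rw [hrY G y hy]
end

section
/- If B : ℓ² × ℓ² → ℝ is the standard inner product bilinear form, X is a Banach space containing ℓ² as a closed subspace via an isometric embedding j, and there exists a continuous bilinear form B̃ : X × X → ℝ with B̃(j x, j y) = B(x, y) for all x, y ∈ ℓ², then ℓ² (i.e., the range of j) is complemented in X; conversely, if the range of j is complemented in X, then such an extension B̃ exists. -/
/-!
Through the Riesz representation, an extension `B` of the scalar product yields a continuous left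
inverse `Q z := toDual⁻¹ (y ↦ B z (j y))` of `j`. Conversely a projection onto the range of the
isometry `j` yields the left inverse `j⁻¹ ∘ P`, and then `B z w := ⟪Q z, Q w⟫` extends the scalar
product. Left inverses of `j` and projections onto its range correspond via `P = j ∘ Q`.
-/

theorem Submodule.closedComplemented_iff_exists_projection {R M : Type*} [Ring R]
    [AddCommGroup M] [Module R M] [TopologicalSpace M] (p : Submodule R M) :
    p.ClosedComplemented ↔ ∃ P : M →L[R] M, Set.range P = p ∧ ∀ z ∈ p, P z = z := by
  constructor
  · rintro ⟨f, hf⟩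
    refine ⟨p.subtypeL ∘L f, subset_antisymm ?_ fun z hz => ⟨z, congrArg Subtype.val (hf ⟨z, hz⟩)⟩,
      fun z hz => congrArg Subtype.val (hf ⟨z, hz⟩)⟩
    rintro _ ⟨z, rfl⟩
    exact (f z).2
  · rintro ⟨P, hrange, hfix⟩
    exact ⟨P.codRestrict p fun z => SetLike.mem_coe.1 (hrange ▸ Set.mem_range_self z),
      fun z => Subtype.ext (hfix z z.2)⟩

theorem LinearIsometry.closedComplemented_range_iff_exists_leftInverse {𝕜 E F : Type*}
    [NormedField 𝕜] [NormedAddCommGroup E] [SeminormedAddCommGroup F] [NormedSpace 𝕜 E]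
    [NormedSpace 𝕜 F] (ι : E →ₗᵢ[𝕜] F) :
    (LinearMap.range ι.toLinearMap).ClosedComplemented ↔
      ∃ Q : F →L[𝕜] E, Function.LeftInverse Q ι := by
  constructor
  · rintro ⟨P, hP⟩
    refine ⟨ι.equivRange.symm.toContinuousLinearEquiv.toContinuousLinearMap ∘L P, fun x => ?_⟩
    have hPι : P (ι x) = ι.equivRange x := hP (ι.equivRange x)
    simp [hPι]
  · rintro ⟨Q, hQ⟩
    exact ι.toContinuousLinearMap.closedComplemented_range_of_leftInverse Q hQ

theorem exists_leftInverse_of_extends_inner {E X : Type*} [NormedAddCommGroup E]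
    [InnerProductSpace ℝ E] [CompleteSpace E] [NormedAddCommGroup X] [NormedSpace ℝ X]
    (j : E →L[ℝ] X) (B : X →L[ℝ] X →L[ℝ] ℝ) (hB : ∀ x y, B (j x) (j y) = inner ℝ x y) :
    ∃ Q : X →L[ℝ] E, Function.LeftInverse Q j := by
  let C : X →L[ℝ] StrongDual ℝ E := B.bilinearComp (.id ℝ X) j
  have hC : ∀ x, C (j x) = InnerProductSpace.toDual ℝ E x := fun x => by ext y; simp [C, hB]
  exact ⟨(InnerProductSpace.toDual ℝ E).symm.toContinuousLinearEquiv.toContinuousLinearMap ∘L C,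
    fun x => by simp [hC]⟩

theorem inner_product_extends_iff_complemented_general
    {X : Type*} [NormedAddCommGroup X] [NormedSpace ℝ X]
    (j : lp (fun _ : ℕ => ℝ) 2 →L[ℝ] X) (hj : ∀ x, ‖j x‖ = ‖x‖) :
    (∃ B : X →L[ℝ] X →L[ℝ] ℝ, ∀ x y : lp (fun _ : ℕ => ℝ) 2,
        B (j x) (j y) = (inner ℝ x y : ℝ)) ↔
      (∃ P : X →L[ℝ] X, Set.range P = Set.range j ∧ ∀ z ∈ Set.range j, P z = z) := by
  let ι : lp (fun _ : ℕ => ℝ) 2 →ₗᵢ[ℝ] X := ⟨j, hj⟩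
  have hι : Set.range j = LinearMap.range ι.toLinearMap := (LinearMap.coe_range _).symm
  simp only [hι, SetLike.mem_coe]
  rw [← Submodule.closedComplemented_iff_exists_projection,
    ι.closedComplemented_range_iff_exists_leftInverse]
  constructor
  · rintro ⟨B, hB⟩
    exact exists_leftInverse_of_extends_inner j B hB
  · rintro ⟨Q, hQ⟩
    exact ⟨(innerSL ℝ).bilinearComp Q Q, fun x y => congrArg₂ (inner ℝ) (hQ x) (hQ y)⟩

/-- The scalar product on `ℓ²` extends to a continuous bilinear form on a superspace `X`
if and only if the (image of the) copy of `ℓ²` is complemented in `X`. -/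
theorem inner_product_extends_iff_complemented
    {X : Type*} [NormedAddCommGroup X] [NormedSpace ℝ X] [CompleteSpace X]
    (j : lp (fun _ : ℕ => ℝ) 2 →L[ℝ] X) (hj : ∀ x, ‖j x‖ = ‖x‖)
    (hrange : IsClosed (Set.range j)) :
    (∃ B : X →L[ℝ] X →L[ℝ] ℝ, ∀ x y : lp (fun _ : ℕ => ℝ) 2,
        B (j x) (j y) = (inner ℝ x y : ℝ)) ↔
      (∃ P : X →L[ℝ] X, Set.range P = Set.range j ∧ ∀ z ∈ Set.range j, P z = z) :=
  inner_product_extends_iff_complemented_general j hj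
end

section
/- Let H be a Banach space isomorphic to its dual, i.e., there exists a linear isomorphism τ : H → H* which is bounded with bounded inverse. Suppose H is a closed subspace of a Banach space X via an isometric embedding j, and the bilinear form B(x,y) := (τ x)(y) on H × H extends to a continuous bilinear form on X × X. Then the range of j is complemented in X. -/
/-!
Restricting the first argument of the extension to `X` and the second to `H` gives a bounded map
`X → H*`, `z ↦ Bext z (j ·)`, which sends `j x` to `τ x`. Composing with `τ⁻¹` yields a bounded
left inverse `q` of `j`, and `j ∘ q` is the required projection.
-/

namespace ContinuousLinearMap

variable {𝕜 H X : Type*} [NontriviallyNormedField 𝕜]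
  [NormedAddCommGroup H] [NormedSpace 𝕜 H] [NormedAddCommGroup X] [NormedSpace 𝕜 X]

theorem exists_projection_onto_range_of_leftInverse (j : H →L[𝕜] X) (q : X →L[𝕜] H)
    (hq : ∀ x, q (j x) = x) :
    ∃ P : X →L[𝕜] X, Set.range P = Set.range j ∧ ∀ z ∈ Set.range j, P z = z := by
  have hP : ∀ x, (j ∘L q) (j x) = j x := fun x => by simp [hq]
  refine ⟨j ∘L q, ?_, ?_⟩
  · apply le_antisymm
    · rintro _ ⟨z, rfl⟩
      exact ⟨q z, rfl⟩
    · rintro _ ⟨x, rfl⟩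
      exact ⟨j x, hP x⟩
  · rintro _ ⟨x, rfl⟩
    exact hP x

noncomputable def leftInverseOfBilinearExtension (τ : H ≃L[𝕜] StrongDual 𝕜 H) (j : H →L[𝕜] X)
    (Bext : X →L[𝕜] X →L[𝕜] 𝕜) : X →L[𝕜] H :=
  (τ.symm : StrongDual 𝕜 H →L[𝕜] H) ∘L (Bext.flip ∘L j).flip

theorem leftInverseOfBilinearExtension_apply_apply (τ : H ≃L[𝕜] StrongDual 𝕜 H)
    (j : H →L[𝕜] X) (Bext : X →L[𝕜] X →L[𝕜] 𝕜) (hBext : ∀ x y : H, Bext (j x) (j y) = (τ x) y)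
    (x : H) : leftInverseOfBilinearExtension τ j Bext (j x) = x := by
  have hdual : (Bext.flip ∘L j).flip (j x) = τ x := by
    ext y
    simp [hBext]
  simp [leftInverseOfBilinearExtension, hdual]

end ContinuousLinearMap

theorem complemented_of_selfdual_bilinear_extension_general
    {H X : Type*} [NormedAddCommGroup H] [NormedSpace ℝ H]
    [NormedAddCommGroup X] [NormedSpace ℝ X]
    (τ : H ≃L[ℝ] StrongDual ℝ H)
    (j : H →L[ℝ] X)
    (Bext : X →L[ℝ] X →L[ℝ] ℝ)
    (hBext : ∀ x y : H, Bext (j x) (j y) = (τ x) y) :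
    ∃ P : X →L[ℝ] X, Set.range P = Set.range j ∧ ∀ z ∈ Set.range j, P z = z :=
  ContinuousLinearMap.exists_projection_onto_range_of_leftInverse j _
    (ContinuousLinearMap.leftInverseOfBilinearExtension_apply_apply τ j Bext hBext)

/-- If `H` is isomorphic to its dual via `τ`, `H` embeds isometrically in `X` via `j`,
and the bilinear form `B(x,y) = (τ x)(y)` extends to a continuous bilinear form on `X × X`,
then the range of `j` is complemented in `X`. -/
theorem complemented_of_selfdual_bilinear_extension
    {H X : Type*} [NormedAddCommGroup H] [NormedSpace ℝ H] [CompleteSpace H]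
    [NormedAddCommGroup X] [NormedSpace ℝ X] [CompleteSpace X]
    (τ : H ≃L[ℝ] StrongDual ℝ H)
    (j : H →L[ℝ] X) (hj : ∀ x, ‖j x‖ = ‖x‖) (hrange : IsClosed (Set.range j))
    (Bext : X →L[ℝ] X →L[ℝ] ℝ)
    (hBext : ∀ x y : H, Bext (j x) (j y) = (τ x) y) :
    ∃ P : X →L[ℝ] X, Set.range P = Set.range j ∧ ∀ z ∈ Set.range j, P z = z :=
  complemented_of_selfdual_bilinear_extension_general τ j Bext hBext
end

section
/- Let Y be locally λ-complemented in X via isometric embedding j. Then there exists a bounded linear extension operator Φ : B(Y) → B(X) for continuous bilinear forms, with ‖Φ(φ)‖ ≤ λ²‖φ‖ and Φ(φ)(j y₁, j y₂) = φ(y₁, y₂) for all y₁, y₂ ∈ Y. -/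
open Filter Topology
open scoped Classical

namespace BilExtAux

variable {Y X : Type*} [NormedAddCommGroup Y] [NormedSpace ℝ Y]
  [NormedAddCommGroup X] [NormedSpace ℝ X]

/-- The directed set of finite-dimensional subspaces of `X`. -/
abbrev Idx (X : Type*) [NormedAddCommGroup X] [NormedSpace ℝ X] :=
  {F : Submodule ℝ X // FiniteDimensional ℝ F}

noncomputable instance : SemilatticeSup (Idx X) :=
  Subtype.semilatticeSup fun F G hF hG => by
    haveI := hF; haveI := hG; infer_instance

instance : Nonempty (Idx X) := ⟨⟨⊥, inferInstance⟩⟩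

/-- An ultrafilter refining the `atTop` filter on finite-dimensional subspaces. -/
noncomputable def U (X : Type*) [NormedAddCommGroup X] [NormedSpace ℝ X] :
    Ultrafilter (Idx X) := Ultrafilter.of atTop

lemma eventually_mem (x : X) : ∀ᶠ F in (U X : Filter (Idx X)), x ∈ F.1 := by
  have h : {F : Idx X | x ∈ F.1} ∈ (atTop : Filter (Idx X)) := by
    refine eventually_atTop.2 ⟨⟨Submodule.span ℝ {x}, inferInstance⟩, fun F hF => ?_⟩
    exact hF (Submodule.subset_span (Set.mem_singleton x))
  exact Ultrafilter.of_le _ h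

variable (r : ∀ F : Idx X, (F.1 : Submodule ℝ X) →L[ℝ] Y)

/-- Extend the local retraction by junk values. -/
noncomputable def rr (F : Idx X) (x : X) : Y :=
  if h : x ∈ F.1 then r F ⟨x, h⟩ else 0

lemma rr_of_mem (F : Idx X) {x : X} (h : x ∈ F.1) : rr r F x = r F ⟨x, h⟩ :=
  dif_pos h

lemma rr_add (F : Idx X) {x₁ x₂ : X} (h₁ : x₁ ∈ F.1) (h₂ : x₂ ∈ F.1) :
    rr r F (x₁ + x₂) = rr r F x₁ + rr r F x₂ := by
  have h : x₁ + x₂ ∈ F.1 := add_mem h₁ h₂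
  simp only [rr, dif_pos h₁, dif_pos h₂, dif_pos h]
  rw [show (⟨x₁ + x₂, h⟩ : F.1) = ⟨x₁, h₁⟩ + ⟨x₂, h₂⟩ from rfl, map_add]

lemma rr_smul (F : Idx X) (c : ℝ) {x : X} (h : x ∈ F.1) :
    rr r F (c • x) = c • rr r F x := by
  have hc : c • x ∈ F.1 := Submodule.smul_mem _ c h
  simp only [rr, dif_pos h, dif_pos hc]
  rw [show (⟨c • x, hc⟩ : F.1) = c • (⟨x, h⟩ : F.1) from rfl, map_smul]

lemma norm_rr_le {lam : ℝ} (hlam : 0 ≤ lam) (hr : ∀ F, ‖r F‖ ≤ lam) (F : Idx X) (x : X) :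
    ‖rr r F x‖ ≤ lam * ‖x‖ := by
  unfold rr; split_ifs with h
  · calc ‖r F ⟨x, h⟩‖ ≤ ‖r F‖ * ‖(⟨x, h⟩ : F.1)‖ := (r F).le_opNorm _
      _ ≤ lam * ‖x‖ := by
          have hx : ‖(⟨x, h⟩ : F.1)‖ = ‖x‖ := rfl
          rw [hx]; exact mul_le_mul_of_nonneg_right (hr F) (norm_nonneg x)
  · simpa using mul_nonneg hlam (norm_nonneg x)

end BilExtAux

set_option maxHeartbeats 1000000 in
/-- If `Y` is locally `λ`-complemented in `X` via the isometric embedding `j`, then there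
is a bounded linear extension operator `Φ` for continuous bilinear forms, with
`‖Φ(φ)‖ ≤ λ²‖φ‖`. -/
theorem bilinear_extension_operator_of_locally_complemented
    {Y X : Type*} [NormedAddCommGroup Y] [NormedSpace ℝ Y] [CompleteSpace Y]
    [NormedAddCommGroup X] [NormedSpace ℝ X] [CompleteSpace X]
    (j : Y →L[ℝ] X) (hj : ∀ y, ‖j y‖ = ‖y‖) (lam : ℝ)
    (hloc : ∀ F : Submodule ℝ X, FiniteDimensional ℝ F →
        ∃ r : F →L[ℝ] Y, ‖r‖ ≤ lam ∧ ∀ (y : Y) (h : j y ∈ F), r ⟨j y, h⟩ = y) :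
    ∃ Φ : (Y →L[ℝ] Y →L[ℝ] ℝ) →L[ℝ] (X →L[ℝ] X →L[ℝ] ℝ),
      ∀ φ : Y →L[ℝ] Y →L[ℝ] ℝ,
        ‖Φ φ‖ ≤ lam ^ 2 * ‖φ‖ ∧ ∀ y₁ y₂ : Y, Φ φ (j y₁) (j y₂) = φ y₁ y₂ := by
  classical
  open BilExtAux in
  choose r hrn hrj using fun F : BilExtAux.Idx X => hloc F.1 F.2
  have hlam : 0 ≤ lam := by
    obtain ⟨r₀, hr₀, -⟩ := hloc ⊥ inferInstance
    exact le_trans (norm_nonneg r₀) hr₀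
  set 𝒰 : Filter (BilExtAux.Idx X) := ↑(BilExtAux.U X) with h𝒰
  set f : (Y →L[ℝ] Y →L[ℝ] ℝ) → X → X → BilExtAux.Idx X → ℝ :=
    fun φ x₁ x₂ F => φ (BilExtAux.rr r F x₁) (BilExtAux.rr r F x₂) with hf
  have hbound : ∀ φ x₁ x₂, ∀ᶠ F in 𝒰,
      |f φ x₁ x₂ F| ≤ ‖φ‖ * (lam * ‖x₁‖) * (lam * ‖x₂‖) := by
    intro φ x₁ x₂
    filter_upwards with F
    have h1 := BilExtAux.norm_rr_le r hlam hrn F x₁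
    have h2 := BilExtAux.norm_rr_le r hlam hrn F x₂
    calc |f φ x₁ x₂ F| = ‖φ (BilExtAux.rr r F x₁) (BilExtAux.rr r F x₂)‖ := rfl
      _ ≤ ‖φ‖ * ‖BilExtAux.rr r F x₁‖ * ‖BilExtAux.rr r F x₂‖ := φ.le_opNorm₂ _ _
      _ ≤ ‖φ‖ * (lam * ‖x₁‖) * (lam * ‖x₂‖) := by gcongr <;> positivity
  have key : ∀ φ x₁ x₂, Tendsto (f φ x₁ x₂) 𝒰 (𝓝 (limUnder 𝒰 (f φ x₁ x₂))) := by
    intro φ x₁ x₂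
    set C := ‖φ‖ * (lam * ‖x₁‖) * (lam * ‖x₂‖) with hC
    have hmem : Set.Icc (-C) C ∈ (BilExtAux.U X).map (f φ x₁ x₂) := by
      rw [Ultrafilter.mem_map]
      filter_upwards [hbound φ x₁ x₂] with F hF
      exact abs_le.mp hF
    obtain ⟨c, -, hc⟩ := (isCompact_Icc (a := -C) (b := C)).ultrafilter_le_nhds
      ((BilExtAux.U X).map (f φ x₁ x₂)) (le_principal_iff.2 hmem)
    have ht : Tendsto (f φ x₁ x₂) 𝒰 (𝓝 c) := by
      rw [h𝒰, Tendsto, ← Ultrafilter.coe_map]; exact hc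
    rw [ht.limUnder_eq]; exact ht
  set b : (Y →L[ℝ] Y →L[ℝ] ℝ) → X → X → ℝ :=
    fun φ x₁ x₂ => limUnder 𝒰 (f φ x₁ x₂) with hbdef
  have hb_le : ∀ φ x₁ x₂, |b φ x₁ x₂| ≤ ‖φ‖ * (lam * ‖x₁‖) * (lam * ‖x₂‖) :=
    fun φ x₁ x₂ => le_of_tendsto (key φ x₁ x₂).abs (hbound φ x₁ x₂)
  have hjb : ∀ φ (y₁ y₂ : Y), b φ (j y₁) (j y₂) = φ y₁ y₂ := by
    intro φ y₁ y₂
    refine tendsto_nhds_unique (key φ (j y₁) (j y₂))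
      (Tendsto.congr' ?_ tendsto_const_nhds)
    filter_upwards [BilExtAux.eventually_mem (j y₁), BilExtAux.eventually_mem (j y₂)]
      with F h1 h2
    simp only [hf, BilExtAux.rr_of_mem r F h1, BilExtAux.rr_of_mem r F h2,
      hrj F y₁ h1, hrj F y₂ h2]
  -- linearity in the first variable
  have hadd₁ : ∀ φ x₁ x₁' x₂, b φ (x₁ + x₁') x₂ = b φ x₁ x₂ + b φ x₁' x₂ := by
    intro φ x₁ x₁' x₂
    refine tendsto_nhds_unique (key φ (x₁ + x₁') x₂)
      (Tendsto.congr' ?_ ((key φ x₁ x₂).add (key φ x₁' x₂)))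
    filter_upwards [BilExtAux.eventually_mem x₁, BilExtAux.eventually_mem (X := X) x₁'] with F h1 h1'
    simp only [hf, BilExtAux.rr_add r F h1 h1', map_add, ContinuousLinearMap.add_apply]
  have hsmul₁ : ∀ φ (c : ℝ) x₁ x₂, b φ (c • x₁) x₂ = c • b φ x₁ x₂ := by
    intro φ c x₁ x₂
    refine tendsto_nhds_unique (key φ (c • x₁) x₂)
      (Tendsto.congr' ?_ ((key φ x₁ x₂).const_smul c))
    filter_upwards [BilExtAux.eventually_mem (X := X) x₁] with F h1
    simp only [hf, BilExtAux.rr_smul r F c h1, map_smul, ContinuousLinearMap.smul_apply,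
      smul_eq_mul]
  have hadd₂ : ∀ φ x₁ x₂ x₂', b φ x₁ (x₂ + x₂') = b φ x₁ x₂ + b φ x₁ x₂' := by
    intro φ x₁ x₂ x₂'
    refine tendsto_nhds_unique (key φ x₁ (x₂ + x₂'))
      (Tendsto.congr' ?_ ((key φ x₁ x₂).add (key φ x₁ x₂')))
    filter_upwards [BilExtAux.eventually_mem x₂, BilExtAux.eventually_mem (X := X) x₂'] with F h2 h2'
    simp only [hf, BilExtAux.rr_add r F h2 h2', map_add]
  have hsmul₂ : ∀ φ (c : ℝ) x₁ x₂, b φ x₁ (c • x₂) = c • b φ x₁ x₂ := by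
    intro φ c x₁ x₂
    refine tendsto_nhds_unique (key φ x₁ (c • x₂))
      (Tendsto.congr' ?_ ((key φ x₁ x₂).const_smul c))
    filter_upwards [BilExtAux.eventually_mem (X := X) x₂] with F h2
    simp only [hf, BilExtAux.rr_smul r F c h2, map_smul, smul_eq_mul]
  -- linearity in φ
  have haddφ : ∀ φ ψ x₁ x₂, b (φ + ψ) x₁ x₂ = b φ x₁ x₂ + b ψ x₁ x₂ := by
    intro φ ψ x₁ x₂
    refine tendsto_nhds_unique (key (φ + ψ) x₁ x₂)
      (Tendsto.congr' ?_ ((key φ x₁ x₂).add (key ψ x₁ x₂)))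
    filter_upwards with F
    simp [hf]
  have hsmulφ : ∀ (c : ℝ) φ x₁ x₂, b (c • φ) x₁ x₂ = c • b φ x₁ x₂ := by
    intro c φ x₁ x₂
    refine tendsto_nhds_unique (key (c • φ) x₁ x₂)
      (Tendsto.congr' ?_ ((key φ x₁ x₂).const_smul c))
    filter_upwards with F
    simp [hf]
  -- build the bilinear map for each φ
  have hbd : ∀ φ (x₁ x₂ : X), ‖b φ x₁ x₂‖ ≤ (lam ^ 2 * ‖φ‖) * ‖x₁‖ * ‖x₂‖ := by
    intro φ x₁ x₂
    have := hb_le φ x₁ x₂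
    rw [Real.norm_eq_abs]
    calc |b φ x₁ x₂| ≤ ‖φ‖ * (lam * ‖x₁‖) * (lam * ‖x₂‖) := this
      _ = (lam ^ 2 * ‖φ‖) * ‖x₁‖ * ‖x₂‖ := by ring
  let B : (Y →L[ℝ] Y →L[ℝ] ℝ) → (X →L[ℝ] X →L[ℝ] ℝ) := fun φ =>
    LinearMap.mkContinuous₂
      (LinearMap.mk₂ ℝ (b φ) (hadd₁ φ) (hsmul₁ φ) (hadd₂ φ) (hsmul₂ φ))
      (lam ^ 2 * ‖φ‖) (hbd φ)
  have hBapp : ∀ φ x₁ x₂, B φ x₁ x₂ = b φ x₁ x₂ := fun φ x₁ x₂ => rfl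
  let Φlin : (Y →L[ℝ] Y →L[ℝ] ℝ) →ₗ[ℝ] (X →L[ℝ] X →L[ℝ] ℝ) :=
    { toFun := B
      map_add' := by
        intro φ ψ
        ext x₁ x₂
        simp only [ContinuousLinearMap.add_apply, hBapp]
        exact haddφ φ ψ x₁ x₂
      map_smul' := by
        intro c φ
        ext x₁ x₂
        simp only [ContinuousLinearMap.coe_smul', Pi.smul_apply, RingHom.id_apply,
          ContinuousLinearMap.smul_apply, hBapp]
        exact hsmulφ c φ x₁ x₂ }
  have hΦnorm : ∀ φ, ‖Φlin φ‖ ≤ lam ^ 2 * ‖φ‖ := by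
    intro φ
    exact LinearMap.mkContinuous₂_norm_le _ (by positivity) (hbd φ)
  let Φ : (Y →L[ℝ] Y →L[ℝ] ℝ) →L[ℝ] (X →L[ℝ] X →L[ℝ] ℝ) :=
    ⟨Φlin, AddMonoidHomClass.continuous_of_bound Φlin (lam ^ 2) hΦnorm⟩
  refine ⟨Φ, fun φ => ⟨?_, fun y₁ y₂ => ?_⟩⟩
  · exact hΦnorm φ
  · show B φ (j y₁) (j y₂) = φ y₁ y₂
    rw [hBapp]; exact hjb φ y₁ y₂
end

section
/- If a Banach space Y is locally λ-complemented in X via embedding j, and Y₀ ⊆ Y, X₀ ⊆ X are complemented subspaces (with projections of norms μ_Y, μ_X respectively) such that j(Y₀) ⊆ X₀, then Y₀ is locally complemented in X₀ (with constant at most λ·μ_Y, via the restricted embedding). -/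
/-! The retraction for `F ⊆ X₀` is `p_Y ∘ r ∘ ι`, where `r` is the local retraction of `X`
onto `Y` for the image of `F` in `X`, and `ι : F → X` is the isometric inclusion: `r` undoes `j`
on `j(Y₀)`, `p_Y` fixes `Y₀` and takes values in `Y₀`, so the norm is at most `μ_Y · λ · 1`. -/

namespace Submodule

variable {𝕜 E : Type*} [NormedField 𝕜] [SeminormedAddCommGroup E] [NormedSpace 𝕜 E]

def toMapSubtypeₗᵢ (X₀ : Submodule 𝕜 E) (F : Submodule 𝕜 X₀) : F →ₗᵢ[𝕜] F.map X₀.subtype where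
  toLinearMap := (X₀.subtype.comp F.subtype).codRestrict _ fun x => mem_map_of_mem x.2
  norm_map' _ := rfl

end Submodule

namespace ContinuousLinearMap

variable {𝕜 Y X : Type*} [NontriviallyNormedField 𝕜] [SeminormedAddCommGroup Y] [NormedSpace 𝕜 Y]
  [SeminormedAddCommGroup X] [NormedSpace 𝕜 X]

theorem exists_restricted_retraction (j : Y →L[𝕜] X) {Y₀ : Submodule 𝕜 Y} {X₀ : Submodule 𝕜 X}
    (hsub : ∀ y : Y, y ∈ Y₀ → j y ∈ X₀) (F : Submodule 𝕜 X₀) {lam muY : ℝ}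
    (r : F.map X₀.subtype →L[𝕜] Y) (hr_norm : ‖r‖ ≤ lam)
    (hr : ∀ (y : Y) (h : j y ∈ F.map X₀.subtype), r ⟨j y, h⟩ = y)
    (pY : Y →L[𝕜] Y) (hpY_mem : ∀ y, pY y ∈ Y₀) (hpY_id : ∀ y ∈ Y₀, pY y = y)
    (hpY_norm : ‖pY‖ ≤ muY) :
    ∃ r₀ : F →L[𝕜] Y₀, ‖r₀‖ ≤ lam * muY ∧
      ∀ (y : Y₀) (h : (⟨j y, hsub y y.2⟩ : X₀) ∈ F), r₀ ⟨⟨j y, hsub y y.2⟩, h⟩ = y := by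
  let q : Y →L[𝕜] Y₀ := pY.codRestrict Y₀ hpY_mem
  let ι := (Submodule.toMapSubtypeₗᵢ X₀ F).toContinuousLinearMap
  have hq : ‖q‖ ≤ muY :=
    (opNorm_le_bound _ (norm_nonneg pY) fun y => pY.le_opNorm y).trans hpY_norm
  refine ⟨q.comp (r.comp ι), ?_, fun y h => Subtype.ext ?_⟩
  · have hlam : 0 ≤ lam := (norm_nonneg r).trans hr_norm
    have hmuY : 0 ≤ muY := (norm_nonneg pY).trans hpY_norm
    calc ‖q.comp (r.comp ι)‖ ≤ ‖q‖ * (‖r‖ * ‖ι‖) :=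
          (opNorm_comp_le _ _).trans (by gcongr; exact opNorm_comp_le _ _)
      _ ≤ muY * (lam * 1) := by
          gcongr
          exact LinearIsometry.norm_toContinuousLinearMap_le _
      _ = lam * muY := by ring
  · exact (congrArg pY (hr y (Submodule.mem_map_of_mem h))).trans (hpY_id _ y.2)

end ContinuousLinearMap

theorem locally_complemented_restriction_general
    {Y X : Type*} [NormedAddCommGroup Y] [NormedSpace ℝ Y]
    [NormedAddCommGroup X] [NormedSpace ℝ X]
    (j : Y →L[ℝ] X) (lam : ℝ)
    (hloc : ∀ F : Submodule ℝ X, FiniteDimensional ℝ F →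
        ∃ r : F →L[ℝ] Y, ‖r‖ ≤ lam ∧ ∀ (y : Y) (h : j y ∈ F), r ⟨j y, h⟩ = y)
    (Y₀ : Submodule ℝ Y) (X₀ : Submodule ℝ X)
    (pY : Y →L[ℝ] Y) (muY : ℝ) (hpY_range : LinearMap.range (pY : Y →ₗ[ℝ] Y) = Y₀)
    (hpY_id : ∀ y ∈ Y₀, pY y = y) (hpY_norm : ‖pY‖ = muY)
    (hsub : ∀ y : Y, y ∈ Y₀ → j y ∈ X₀) :
    ∀ F : Submodule ℝ X₀, FiniteDimensional ℝ F →
      ∃ r : F →L[ℝ] Y₀, ‖r‖ ≤ lam * muY ∧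
        ∀ (y : Y₀) (h : (⟨j y, hsub y y.2⟩ : X₀) ∈ F),
          r ⟨⟨j y, hsub y y.2⟩, h⟩ = y := by
  intro F hF
  obtain ⟨r, hr_norm, hr⟩ := hloc (F.map X₀.subtype) (Module.Finite.map F X₀.subtype)
  exact j.exists_restricted_retraction hsub F r hr_norm hr pY
    (fun y => hpY_range ▸ LinearMap.mem_range_self _ y) hpY_id hpY_norm.le

/-- If `Y` is locally `λ`-complemented in `X` via `j`, and `Y₀ ⊆ Y`, `X₀ ⊆ X` are
complemented subspaces (via projections `p_Y`, `p_X`) with `j(Y₀) ⊆ X₀`, then `Y₀` is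
locally (`λ·μ_Y`)-complemented in `X₀` via the restricted embedding. -/
theorem locally_complemented_restriction
    {Y X : Type*} [NormedAddCommGroup Y] [NormedSpace ℝ Y] [CompleteSpace Y]
    [NormedAddCommGroup X] [NormedSpace ℝ X] [CompleteSpace X]
    (j : Y →L[ℝ] X) (hj : ∀ y, ‖j y‖ = ‖y‖) (lam : ℝ)
    (hloc : ∀ F : Submodule ℝ X, FiniteDimensional ℝ F →
        ∃ r : F →L[ℝ] Y, ‖r‖ ≤ lam ∧ ∀ (y : Y) (h : j y ∈ F), r ⟨j y, h⟩ = y)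
    (Y₀ : Submodule ℝ Y) (X₀ : Submodule ℝ X)
    (pY : Y →L[ℝ] Y) (muY : ℝ) (hpY_range : LinearMap.range (pY : Y →ₗ[ℝ] Y) = Y₀)
    (hpY_id : ∀ y ∈ Y₀, pY y = y) (hpY_norm : ‖pY‖ = muY)
    (pX : X →L[ℝ] X) (hpX_range : LinearMap.range (pX : X →ₗ[ℝ] X) = X₀)
    (hpX_id : ∀ x ∈ X₀, pX x = x)
    (hsub : ∀ y : Y, y ∈ Y₀ → j y ∈ X₀) :
    ∀ F : Submodule ℝ X₀, FiniteDimensional ℝ F →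
      ∃ r : F →L[ℝ] Y₀, ‖r‖ ≤ lam * muY ∧
        ∀ (y : Y₀) (h : (⟨j y, hsub y y.2⟩ : X₀) ∈ F),
          r ⟨⟨j y, hsub y y.2⟩, h⟩ = y :=
  locally_complemented_restriction_general j lam hloc Y₀ X₀ pY muY hpY_range hpY_id hpY_norm hsub
end
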